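/- arXiv:2502.05185 — 2 statements merged into one kernel-verified Lean document; each statement's English description precedes it below -/
import Mathlib

section
/- (Proposition 2, runner-up case.) Let q be a three-candidate partial-ballot profile satisfying the background assumptions Z' < X', Z' < Y', and Y' + Z2 < X' + Z1. Then q demonstrates a reinforcement paradox for the runner-up B if and only if either (1) Y' > X' and Y' > −X1 + X2 + Z', or (2) Y' > X' − Z2, Y' > −X1 + X2 + Z1 − Z2, and Y' > (1/3)(−X1 + 2X2 + 2X3 + Z1 − Z2). -/
/-- A three-candidate partial-ballot profile: numbers of ballots with rankings
A≻B≻C, A≻C≻B, A only, B≻A≻C, B≻C≻A, B only, C≻A≻B, C≻B≻A, C only, respectively. -/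
structure PProfile where
  x1 : ℝ
  x2 : ℝ
  x3 : ℝ
  y1 : ℝ
  y2 : ℝ
  y3 : ℝ
  z1 : ℝ
  z2 : ℝ
  z3 : ℝ

namespace PProfile

def nonneg (q : PProfile) : Prop :=
  0 ≤ q.x1 ∧ 0 ≤ q.x2 ∧ 0 ≤ q.x3 ∧ 0 ≤ q.y1 ∧ 0 ≤ q.y2 ∧ 0 ≤ q.y3 ∧
    0 ≤ q.z1 ∧ 0 ≤ q.z2 ∧ 0 ≤ q.z3

instance : Add PProfile :=
  ⟨fun p q => ⟨p.x1 + q.x1, p.x2 + q.x2, p.x3 + q.x3, p.y1 + q.y1, p.y2 + q.y2,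
    p.y3 + q.y3, p.z1 + q.z1, p.z2 + q.z2, p.z3 + q.z3⟩⟩

/-- First-place total of candidate A. -/
def X (q : PProfile) : ℝ := q.x1 + q.x2 + q.x3
/-- First-place total of candidate B. -/
def Y (q : PProfile) : ℝ := q.y1 + q.y2 + q.y3
/-- First-place total of candidate C. -/
def Z (q : PProfile) : ℝ := q.z1 + q.z2 + q.z3
/-- Total vote. -/
def V (q : PProfile) : ℝ := q.X + q.Y + q.Z

end PProfile

inductive Cand | A | B | C

/-- Candidate `W` wins strictly under IRV (with exhausted ballots removed) in `q`. -/
def wins : Cand → PProfile → Prop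
  | Cand.A, q => q.X > q.Y + q.Z ∨
      (q.Z < q.X ∧ q.Z < q.Y ∧ q.X + q.z1 > q.Y + q.z2) ∨
      (q.Y < q.X ∧ q.Y < q.Z ∧ q.X + q.y1 > q.Z + q.y2)
  | Cand.B, q => q.Y > q.X + q.Z ∨
      (q.Z < q.Y ∧ q.Z < q.X ∧ q.Y + q.z2 > q.X + q.z1) ∨
      (q.X < q.Y ∧ q.X < q.Z ∧ q.Y + q.x1 > q.Z + q.x2)
  | Cand.C, q => q.Z > q.X + q.Y ∨
      (q.X < q.Z ∧ q.X < q.Y ∧ q.Z + q.x2 > q.Y + q.x1) ∨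
      (q.Y < q.Z ∧ q.Y < q.X ∧ q.Z + q.y2 > q.X + q.y1)

/-- Profile `q` demonstrates a reinforcement paradox for candidate `W`. -/
def paradox (W : Cand) (q : PProfile) : Prop :=
  ∃ q1 q2 : PProfile, q1.nonneg ∧ q2.nonneg ∧ q1 + q2 = q ∧
    wins W q1 ∧ wins W q2 ∧ ¬ wins W q

/-- Extensionality for `PProfile`. -/
lemma PProfile.ext9 {p r : PProfile} (e1 : p.x1 = r.x1) (e2 : p.x2 = r.x2)
    (e3 : p.x3 = r.x3) (e4 : p.y1 = r.y1) (e5 : p.y2 = r.y2) (e6 : p.y3 = r.y3)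
    (e7 : p.z1 = r.z1) (e8 : p.z2 = r.z2) (e9 : p.z3 = r.z3) : p = r := by
  cases p; cases r
  simp only at e1 e2 e3 e4 e5 e6 e7 e8 e9
  subst e1 e2 e3 e4 e5 e6 e7 e8 e9
  rfl

/-- Pick a value in a (half-open) interval below a cap. -/
lemma pick (lo hi cap : ℝ) (hlh : lo < hi) (hlc : lo < cap) (h0h : 0 < hi)
    (h0c : 0 ≤ cap) : ∃ v : ℝ, 0 ≤ v ∧ v ≤ cap ∧ lo < v ∧ v < hi := by
  have hml : max lo 0 < hi := max_lt hlh h0h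
  refine ⟨min cap ((max lo 0 + hi) / 2), ?_, min_le_left _ _, ?_, ?_⟩
  · refine le_min h0c ?_
    have := le_max_right lo 0
    linarith
  · rcases min_cases cap ((max lo 0 + hi) / 2) with ⟨e, _⟩ | ⟨e, _⟩
    · rw [e]; exact hlc
    · rw [e]
      have := le_max_left lo 0
      linarith
  · have h := min_le_right cap ((max lo 0 + hi) / 2)
    linarith

/-- Split an amount `t` into three pieces bounded by `a`, `b`, `c`. -/
lemma split3 (t a b c : ℝ) (ha : 0 ≤ a) (hb : 0 ≤ b) (hc : 0 ≤ c) (ht : 0 ≤ t)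
    (htc : t ≤ a + b + c) :
    ∃ s1 s2 s3 : ℝ, 0 ≤ s1 ∧ s1 ≤ a ∧ 0 ≤ s2 ∧ s2 ≤ b ∧ 0 ≤ s3 ∧ s3 ≤ c ∧
      s1 + s2 + s3 = t := by
  refine ⟨min t a, min (t - min t a) b, t - min t a - min (t - min t a) b,
    le_min ht ha, min_le_right _ _, ?_, min_le_right _ _, ?_, ?_, by ring⟩
  · have h := min_le_left t a
    exact le_min (by linarith) hb
  · have h := min_le_left (t - min t a) b
    linarith
  · rcases min_cases t a with ⟨e1, l1⟩ | ⟨e1, l1⟩ <;>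
      rcases min_cases (t - min t a) b with ⟨e2, l2⟩ | ⟨e2, l2⟩ <;> linarith

set_option maxHeartbeats 2000000 in
theorem stmt6 (q : PProfile) (hq : q.nonneg)
    (h1 : q.Z < q.X) (h2 : q.Z < q.Y) (h3 : q.Y + q.z2 < q.X + q.z1) :
    paradox Cand.B q ↔
      ((q.Y > q.X ∧ q.Y > -q.x1 + q.x2 + q.Z) ∨
       (q.Y > q.X - q.z2 ∧ q.Y > -q.x1 + q.x2 + q.z1 - q.z2 ∧
        q.Y > (1 / 3) * (-q.x1 + 2 * q.x2 + 2 * q.x3 + q.z1 - q.z2))) := by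
  obtain ⟨hx1, hx2, hx3, hy1, hy2, hy3, hz1, hz2, hz3⟩ := hq
  simp only [PProfile.X, PProfile.Y, PProfile.Z] at h1 h2 h3 ⊢
  have hnw : ¬ wins Cand.B q := by
    simp only [wins, PProfile.X, PProfile.Y, PProfile.Z]
    rintro (h | ⟨ha, hb, hc⟩ | ⟨ha, hb, hc⟩) <;> linarith
  constructor
  · rintro ⟨p, r, hp, hr, hsum, hwp, hwr, -⟩
    obtain ⟨hp1, hp2, hp3, hp4, hp5, hp6, hp7, hp8, hp9⟩ := hp
    obtain ⟨hr1, hr2, hr3, hr4, hr5, hr6, hr7, hr8, hr9⟩ := hr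
    have e1 : p.x1 + r.x1 = q.x1 := by rw [← hsum]; rfl
    have e2 : p.x2 + r.x2 = q.x2 := by rw [← hsum]; rfl
    have e3 : p.x3 + r.x3 = q.x3 := by rw [← hsum]; rfl
    have e4 : p.y1 + r.y1 = q.y1 := by rw [← hsum]; rfl
    have e5 : p.y2 + r.y2 = q.y2 := by rw [← hsum]; rfl
    have e6 : p.y3 + r.y3 = q.y3 := by rw [← hsum]; rfl
    have e7 : p.z1 + r.z1 = q.z1 := by rw [← hsum]; rfl
    have e8 : p.z2 + r.z2 = q.z2 := by rw [← hsum]; rfl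
    have e9 : p.z3 + r.z3 = q.z3 := by rw [← hsum]; rfl
    simp only [wins, PProfile.X, PProfile.Y, PProfile.Z] at hwp hwr
    rcases hwp with hA | ⟨hB1, hB2, hB3⟩ | ⟨hC1, hC2, hC3⟩ <;>
      rcases hwr with gA | ⟨gB1, gB2, gB3⟩ | ⟨gC1, gC2, gC3⟩ <;>
      first
        | (exfalso; linarith)
        | (left; exact ⟨by linarith, by linarith⟩)
        | (right; exact ⟨by linarith, by linarith, by linarith⟩)
  · rintro (⟨c1a, c1b⟩ | ⟨c2a, c2b, c2c⟩)
    · -- Case (1): partition of types (iii) and (i).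
      set Xv := q.x1 + q.x2 + q.x3 with hXv
      set Yv := q.y1 + q.y2 + q.y3 with hYv
      set Zv := q.z1 + q.z2 + q.z3 with hZv
      set D := Xv + Zv - Yv with hD
      clear_value Xv Yv Zv
      clear_value D
      have hD0 : 0 < D := by simp only [hD, hXv, hYv, hZv]; linarith
      have hDZ : D < Zv := by simp only [hD, hXv, hYv, hZv]; linarith
      have hDb : D < 2 * q.x1 + q.x3 := by simp only [hD, hXv, hYv, hZv]; linarith
      set a := min q.x1 ((D + Zv) / 2) with hadef
      clear_value a
      have ha0 : 0 ≤ a := by rw [hadef]; exact le_min hx1 (by linarith)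
      have hax : a ≤ q.x1 := by rw [hadef]; exact min_le_left _ _
      have haM : a ≤ (D + Zv) / 2 := by rw [hadef]; exact min_le_right _ _
      set c := min q.x3 ((D + Zv) / 2 - a) with hcdef
      clear_value c
      have hc0 : 0 ≤ c := by rw [hcdef]; exact le_min hx3 (by linarith)
      have hcx : c ≤ q.x3 := by rw [hcdef]; exact min_le_left _ _
      have hacM : a + c ≤ (D + Zv) / 2 := by
        have h := min_le_right q.x3 ((D + Zv) / 2 - a)
        rw [← hcdef] at h
        linarith
      have hacZ : a + c < Zv := by linarith
      have h2ac : D < 2 * a + c := by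
        rcases min_cases q.x3 ((D + Zv) / 2 - a) with ⟨ec, lc⟩ | ⟨ec, lc⟩ <;>
          rw [← hcdef] at ec
        · rcases min_cases q.x1 ((D + Zv) / 2) with ⟨ea, la⟩ | ⟨ea, la⟩ <;>
            rw [← hadef] at ea <;> linarith
        · linarith
      set t := (max (a + c) (Zv - a) + (Yv - Xv + a + c)) / 2 with htdef
      clear_value t
      have hts : a + c < t ∧ Zv - a < t ∧ t < Yv - Xv + a + c := by
        have hYX : Xv < Yv := c1a
        rcases max_cases (a + c) (Zv - a) with ⟨em, lm⟩ | ⟨em, lm⟩ <;>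
          exact ⟨by linarith [htdef], by linarith [htdef], by linarith [htdef]⟩
      obtain ⟨ht1, ht2, ht3⟩ := hts
      have ht0 : 0 ≤ t := by linarith
      have htY : t ≤ Yv := by simp only [hXv] at ht3 ⊢; linarith
      obtain ⟨s1, s2, s3, hs1, hs1', hs2, hs2', hs3, hs3', hssum⟩ :=
        split3 t q.y1 q.y2 q.y3 hy1 hy2 hy3 ht0 (by rw [hYv] at htY; exact htY)
      refine ⟨⟨a, 0, c, s1, s2, s3, q.z1, q.z2, q.z3⟩,
        ⟨q.x1 - a, q.x2, q.x3 - c, q.y1 - s1, q.y2 - s2, q.y3 - s3, 0, 0, 0⟩,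
        ⟨ha0, le_refl 0, hc0, hs1, hs2, hs3, hz1, hz2, hz3⟩,
        ⟨by show (0:ℝ) ≤ q.x1 - a; linarith, hx2,
          by show (0:ℝ) ≤ q.x3 - c; linarith,
          by show (0:ℝ) ≤ q.y1 - s1; linarith,
          by show (0:ℝ) ≤ q.y2 - s2; linarith,
          by show (0:ℝ) ≤ q.y3 - s3; linarith,
          le_refl 0, le_refl 0, le_refl 0⟩, ?_, ?_, ?_, hnw⟩
      · exact PProfile.ext9 (by show a + (q.x1 - a) = q.x1; ring)
          (by show 0 + q.x2 = q.x2; ring) (by show c + (q.x3 - c) = q.x3; ring)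
          (by show s1 + (q.y1 - s1) = q.y1; ring)
          (by show s2 + (q.y2 - s2) = q.y2; ring)
          (by show s3 + (q.y3 - s3) = q.y3; ring)
          (by show q.z1 + 0 = q.z1; ring) (by show q.z2 + 0 = q.z2; ring)
          (by show q.z3 + 0 = q.z3; ring)
      · -- first part wins via elimination of A
        simp only [wins, PProfile.X, PProfile.Y, PProfile.Z]
        right; right
        refine ⟨by linarith, by linarith, by linarith⟩
      · -- second part wins by majority
        simp only [wins, PProfile.X, PProfile.Y, PProfile.Z]
        left
        simp only [hXv, hYv] at ht3
        linarith
    · -- Case (2): partition of types (iii) and (ii).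
      set Xv := q.x1 + q.x2 + q.x3 with hXv
      set Yv := q.y1 + q.y2 + q.y3 with hYv
      set Zv := q.z1 + q.z2 + q.z3 with hZv
      set E := Yv + q.z2 - Xv - q.z1 with hE
      set W := Yv + Zv - Xv with hW
      clear_value Xv Yv Zv
      clear_value E
      clear_value W
      have hc2a : 0 < E + q.z1 := by simp only [hE, hXv, hYv]; linarith
      have hc2b : 0 < E + 2 * q.x1 + q.x3 := by
        simp only [hE, hXv, hYv]; linarith
      have hEneg : E < 0 := by simp only [hE, hXv, hYv]; linarith
      have hZ0 : 0 < Zv := by simp only [hZv]; linarith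
      have hW0 : 0 < W := by simp only [hW, hXv, hYv, hZv]; linarith
      have hA1 : -E - Zv < Zv := by simp only [hE, hXv, hYv, hZv]; linarith
      have hA2 : -E - Zv < W := by simp only [hE, hW, hXv, hYv, hZv]; linarith
      have hA3 : -E - W < Zv := by simp only [hE, hW, hXv, hYv, hZv]; linarith
      have hA4 : -E - W < W := by simp only [hE, hW, hXv, hYv, hZv]; linarith
      have hA5 : (-E - q.x3) / 2 < Zv := by
        simp only [hE, hXv, hYv, hZv]; linarith
      have hA6 : (-E - q.x3) / 2 < W := by
        simp only [hE, hW, hXv, hYv, hZv]; linarith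
      have hA9 : -E - Zv < q.x1 := by simp only [hE, hXv, hYv, hZv]; linarith
      have hA10 : -E - W < q.x1 := by simp only [hE, hW, hXv, hYv, hZv]; linarith
      have hA11 : (-E - q.x3) / 2 < q.x1 := by linarith
      obtain ⟨a, ha0, hax, haL, haU⟩ :=
        pick (max (max (-E - Zv) (-E - W)) ((-E - q.x3) / 2)) (min Zv W) q.x1
          (max_lt (max_lt (lt_min hA1 hA2) (lt_min hA3 hA4)) (lt_min hA5 hA6))
          (max_lt (max_lt hA9 hA10) hA11) (lt_min hZ0 hW0) hx1
      have hal1 : -E - Zv < a :=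
        lt_of_le_of_lt ((le_max_left _ _).trans (le_max_left _ _)) haL
      have hal2 : -E - W < a :=
        lt_of_le_of_lt ((le_max_right _ _).trans (le_max_left _ _)) haL
      have hal3 : (-E - q.x3) / 2 < a :=
        lt_of_le_of_lt (le_max_right _ _) haL
      have haZ : a < Zv := lt_of_lt_of_le haU (min_le_left _ _)
      have haW : a < W := lt_of_lt_of_le haU (min_le_right _ _)
      obtain ⟨c, hc0, hcx, hcL, hcU⟩ :=
        pick (-E - 2 * a) (min (Zv - a) (W - a)) q.x3
          (lt_min (by linarith) (by linarith)) (by linarith)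
          (lt_min (by linarith) (by linarith)) hx3
      have hcZ : c < Zv - a := lt_of_lt_of_le hcU (min_le_left _ _)
      have hcW : c < W - a := lt_of_lt_of_le hcU (min_le_right _ _)
      have hWz3 : E + 2 * q.z1 + 2 * q.z3 = W + q.z3 := by
        simp only [hE, hW, hZv]; ring
      have hWz1 : E + 2 * q.z1 + q.z3 = W := by
        simp only [hE, hW, hZv]; ring
      obtain ⟨u2, hu20, hu2x, hu2L, hu2U⟩ :=
        pick (a + c - q.z1 - q.z3) (min ((E + 2 * a + c) / 2) (E + q.z1)) q.z2
          (lt_min (by linarith) (by linarith)) (by linarith)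
          (lt_min (by linarith) (by linarith)) hz2
      have hu2a : u2 < (E + 2 * a + c) / 2 :=
        lt_of_lt_of_le hu2U (min_le_left _ _)
      have hu2b : u2 < E + q.z1 := lt_of_lt_of_le hu2U (min_le_right _ _)
      obtain ⟨u3, hu30, hu3x, hu3L, hu3U⟩ :=
        pick (a + c - q.z1 - u2) (E + 2 * a + c - 2 * u2) q.z3
          (by linarith) (by linarith) (by linarith) hz3
      have hS : a + c < q.z1 + u2 + u3 := by linarith
      have hSZ : q.z1 + u2 + u3 ≤ Zv := by simp only [hZv]; linarith
      have hYZ : Zv < Yv := h2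
      obtain ⟨t, ht0, htY, htL, htU⟩ :=
        pick (max (a + c) (q.z1 + u2 + u3 - a))
          (min (Yv - Zv + (q.z1 + u2 + u3)) (Yv + q.z2 - u2 - Xv + a + c)) Yv
          (max_lt (lt_min (by linarith) (by simp only [hE] at hu2b; linarith))
            (lt_min (by linarith) (by simp only [hE] at hu3U ⊢; linarith)))
          (max_lt (by linarith) (by linarith)) (lt_min (by linarith)
            (by simp only [hE] at hu2b; linarith)) (by linarith)
      have ht1 : a + c < t := lt_of_le_of_lt (le_max_left _ _) htL
      have ht2 : q.z1 + u2 + u3 - a < t := lt_of_le_of_lt (le_max_right _ _) htL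
      have ht3 : t < Yv - Zv + (q.z1 + u2 + u3) :=
        lt_of_lt_of_le htU (min_le_left _ _)
      have ht4 : t < Yv + q.z2 - u2 - Xv + a + c :=
        lt_of_lt_of_le htU (min_le_right _ _)
      obtain ⟨s1, s2, s3, hs1, hs1', hs2, hs2', hs3, hs3', hssum⟩ :=
        split3 t q.y1 q.y2 q.y3 hy1 hy2 hy3 ht0 (by rw [hYv] at htY; exact htY)
      refine ⟨⟨a, 0, c, s1, s2, s3, q.z1, u2, u3⟩,
        ⟨q.x1 - a, q.x2, q.x3 - c, q.y1 - s1, q.y2 - s2, q.y3 - s3, 0,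
          q.z2 - u2, q.z3 - u3⟩,
        ⟨ha0, le_refl 0, hc0, hs1, hs2, hs3, hz1, hu20, hu30⟩,
        ⟨by show (0:ℝ) ≤ q.x1 - a; linarith, hx2,
          by show (0:ℝ) ≤ q.x3 - c; linarith,
          by show (0:ℝ) ≤ q.y1 - s1; linarith,
          by show (0:ℝ) ≤ q.y2 - s2; linarith,
          by show (0:ℝ) ≤ q.y3 - s3; linarith,
          le_refl 0, by show (0:ℝ) ≤ q.z2 - u2; linarith,
          by show (0:ℝ) ≤ q.z3 - u3; linarith⟩, ?_, ?_, ?_, hnw⟩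
      · exact PProfile.ext9 (by show a + (q.x1 - a) = q.x1; ring)
          (by show 0 + q.x2 = q.x2; ring) (by show c + (q.x3 - c) = q.x3; ring)
          (by show s1 + (q.y1 - s1) = q.y1; ring)
          (by show s2 + (q.y2 - s2) = q.y2; ring)
          (by show s3 + (q.y3 - s3) = q.y3; ring)
          (by show q.z1 + 0 = q.z1; ring)
          (by show u2 + (q.z2 - u2) = q.z2; ring)
          (by show u3 + (q.z3 - u3) = q.z3; ring)
      · -- first part wins via elimination of A
        simp only [wins, PProfile.X, PProfile.Y, PProfile.Z]
        right; right
        refine ⟨by linarith, by linarith, by linarith⟩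
      · -- second part wins via elimination of C
        simp only [wins, PProfile.X, PProfile.Y, PProfile.Z]
        right; left
        simp only [hXv, hYv, hZv] at ht3 ht4 haZ hcZ ⊢
        refine ⟨by linarith, by linarith, by linarith⟩
end

section
/- (Proposition 2, plurality loser case.) Let q be a three-candidate partial-ballot profile satisfying the background assumptions Z' < X', Z' < Y', and Y' + Z2 < X' + Z1. Then q demonstrates a reinforcement paradox for the plurality loser C if and only if Z' > X' − Y2, Z' > X1 − X2 + Y1 − Y2, Z' > −X2 + Y', and Z' > (X' + Y')/3. -/
lemma PProfile.add_def' (p r : PProfile) : p + r =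
    ⟨p.x1 + r.x1, p.x2 + r.x2, p.x3 + r.x3, p.y1 + r.y1, p.y2 + r.y2,
      p.y3 + r.y3, p.z1 + r.z1, p.z2 + r.z2, p.z3 + r.z3⟩ := rfl

lemma between_aux (p q r s : ℝ) (h : max p q < min r s) :
    ∃ t : ℝ, p < t ∧ q < t ∧ t < r ∧ t < s := by
  refine ⟨(max p q + min r s) / 2, ?_, ?_, ?_, ?_⟩
  · have h1 := le_max_left p q; linarith
  · have h1 := le_max_right p q; linarith
  · have h1 := min_le_left r s; linarith
  · have h1 := min_le_right r s; linarith

lemma clamp_aux (p q r : ℝ) (h1 : 0 ≤ p) (h2 : 0 ≤ q) (h3 : r ≤ p) (h4 : r ≤ q) :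
    ∃ t : ℝ, 0 ≤ t ∧ t ≤ p ∧ t ≤ q ∧ r ≤ t :=
  ⟨min p q, le_min h1 h2, min_le_left _ _, min_le_right _ _, le_min h3 h4⟩

lemma zsplit_aux (z1 z2 z3 g : ℝ) (hz1 : 0 ≤ z1) (hz2 : 0 ≤ z2) (hz3 : 0 ≤ z3)
    (hg0 : 0 ≤ g) (hgZ : g ≤ z1 + z2 + z3) (hZ0 : 0 < z1 + z2 + z3) :
    ∃ w1 w2 w3 : ℝ, 0 ≤ w1 ∧ w1 ≤ z1 ∧ 0 ≤ w2 ∧ w2 ≤ z2 ∧ 0 ≤ w3 ∧ w3 ≤ z3 ∧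
      w1 + w2 + w3 = g := by
  have hne : z1 + z2 + z3 ≠ 0 := ne_of_gt hZ0
  have hr0 : 0 ≤ g / (z1+z2+z3) := div_nonneg hg0 hZ0.le
  have hr1 : g / (z1+z2+z3) ≤ 1 := by rw [div_le_one hZ0]; linarith
  refine ⟨z1 * (g/(z1+z2+z3)), z2 * (g/(z1+z2+z3)), z3 * (g/(z1+z2+z3)),
    mul_nonneg hz1 hr0, mul_le_of_le_one_right hz1 hr1,
    mul_nonneg hz2 hr0, mul_le_of_le_one_right hz2 hr1,
    mul_nonneg hz3 hr0, mul_le_of_le_one_right hz3 hr1, ?_⟩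
  field_simp

theorem stmt7 (q : PProfile) (hq : q.nonneg)
    (h1 : q.Z < q.X) (h2 : q.Z < q.Y) (h3 : q.Y + q.z2 < q.X + q.z1) :
    paradox Cand.C q ↔
      (q.Z > q.X - q.y2 ∧ q.Z > q.x1 - q.x2 + q.y1 - q.y2 ∧
       q.Z > -q.x2 + q.Y ∧ q.Z > (q.X + q.Y) / 3) := by
  obtain ⟨x1,x2,x3,y1,y2,y3,z1,z2,z3⟩ := q
  simp only [PProfile.nonneg] at hq
  obtain ⟨nx1,nx2,nx3,ny1,ny2,ny3,nz1,nz2,nz3⟩ := hq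
  simp only [PProfile.X, PProfile.Y, PProfile.Z] at h1 h2 h3 ⊢
  constructor
  · rintro ⟨q1, q2, hn1, hn2, hsum, hw1, hw2, -⟩
    obtain ⟨a1,a2,a3,b1,b2,b3,c1,c2,c3⟩ := q1
    obtain ⟨d1,d2,d3,e1,e2,e3,f1,f2,f3⟩ := q2
    simp only [PProfile.nonneg] at hn1 hn2
    obtain ⟨na1,na2,na3,nb1,nb2,nb3,nc1,nc2,nc3⟩ := hn1
    obtain ⟨nd1,nd2,nd3,ne1,ne2,ne3,nf1,nf2,nf3⟩ := hn2
    simp only [PProfile.add_def', PProfile.mk.injEq] at hsum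
    obtain ⟨s1,s2,s3,s4,s5,s6,s7,s8,s9⟩ := hsum
    simp only [wins, PProfile.X, PProfile.Y, PProfile.Z] at hw1 hw2
    refine ⟨?_, ?_, ?_, ?_⟩ <;>
      (rcases hw1 with h|⟨u1,u2,u3⟩|⟨v1,v2,v3⟩ <;>
       rcases hw2 with h'|⟨w1,w2,w3⟩|⟨r1,r2,r3⟩ <;> linarith)
  · rintro ⟨hi, hii, hiii, hiv⟩
    have hZ0 : (0:ℝ) < z1 + z2 + z3 := by linarith
    obtain ⟨sg, hsg1, hsg2, hsg3, hsg4⟩ :=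
      between_aux (x1+x2+x3 + (y1+y2+y3) - 2*(z1+z2+z3)) (x1 + y1 - (z1+z2+z3))
        (z1+z2+z3) (x2+y2)
        (max_lt (lt_min (by linarith) (by linarith)) (lt_min (by linarith) (by linarith)))
    obtain ⟨s, hs1, hs3, hs2, hs4⟩ :=
      between_aux (y1+y2+y3 - (z1+z2+z3)) (sg - y2) x2 (sg - (x1+x2+x3 - (z1+z2+z3)))
        (max_lt (lt_min (by linarith) (by linarith)) (lt_min (by linarith) (by linarith)))
    obtain ⟨bt, hbtdef⟩ : ∃ bt : ℝ, bt = sg - s := ⟨_, rfl⟩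
    have hb1 : x1+x2+x3 - (z1+z2+z3) < bt := by linarith
    have hb2 : bt < y2 := by linarith
    have hs0 : 0 < s := by linarith
    have hb0 : 0 < bt := by linarith
    obtain ⟨T, hT1, hT2, hT3, hT4⟩ :=
      between_aux sg (x1+x2+x3 + (y1+y2+y3) - (z1+z2+z3) - sg) (z1+z2+z3)
        (x1+x2+x3 + (y1+y2+y3) - x1 - y1)
        (max_lt (lt_min (by linarith) (by linarith)) (lt_min (by linarith) (by linarith)))
    obtain ⟨a, ha1, ha4, ha2, ha3⟩ :=
      between_aux s (T - (y1+y2+y3 - y1)) (x1+x2+x3 - x1) (T - bt)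
        (max_lt (lt_min (by linarith) (by linarith)) (lt_min (by linarith) (by linarith)))
    obtain ⟨b, hbdef⟩ : ∃ b : ℝ, b = T - a := ⟨_, rfl⟩
    have hbb1 : bt < b := by linarith
    have hbb2 : b < y1+y2+y3 - y1 := by linarith
    obtain ⟨g, hg1, hg2, hg3, hg4⟩ :=
      between_aux a (y1+y2+y3 - b - s) ((z1+z2+z3) - b) ((z1+z2+z3) - (x1+x2+x3) + a + bt)
        (max_lt (lt_min (by linarith) (by linarith)) (lt_min (by linarith) (by linarith)))
    have hg0 : 0 < g := by linarith
    have hgZ : g < z1 + z2 + z3 := by linarith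
    obtain ⟨u, hu0, hu1, hu2, hu3⟩ := clamp_aux x3 (a - s) (a - x2) nx3 (by linarith)
      (by linarith) (by linarith)
    obtain ⟨v, hv0, hv1, hv2, hv3⟩ := clamp_aux y3 (b - bt) (b - y2) ny3 (by linarith)
      (by linarith) (by linarith)
    obtain ⟨w1, w2, w3, hw10, hw11, hw20, hw21, hw30, hw31, hwsum⟩ :=
      zsplit_aux z1 z2 z3 g nz1 nz2 nz3 hg0.le hgZ.le hZ0
    refine ⟨⟨0, a - u, u, y1, y2 - b + v, y3 - v, w1, w2, w3⟩,
           ⟨x1, x2 - (a - u), x3 - u, 0, b - v, v, z1 - w1, z2 - w2, z3 - w3⟩,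
           ?_, ?_, ?_, ?_, ?_, ?_⟩
    · simp only [PProfile.nonneg]
      refine ⟨le_refl 0, by linarith, hu0, ny1, by linarith, by linarith, hw10, hw20, hw30⟩
    · simp only [PProfile.nonneg]
      refine ⟨nx1, by linarith, by linarith, le_refl 0, by linarith, hv0,
        by linarith, by linarith, by linarith⟩
    · simp only [PProfile.add_def', PProfile.mk.injEq]
      refine ⟨by ring, by ring, by ring, by ring, by ring, by ring, by ring, by ring, by ring⟩
    · simp only [wins, PProfile.X, PProfile.Y, PProfile.Z]
      exact Or.inr (Or.inl ⟨by linarith, by linarith, by linarith⟩)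
    · simp only [wins, PProfile.X, PProfile.Y, PProfile.Z]
      exact Or.inr (Or.inr ⟨by linarith, by linarith, by linarith⟩)
    · simp only [wins, PProfile.X, PProfile.Y, PProfile.Z]
      rintro (h | ⟨h, -, -⟩ | ⟨h, -, -⟩) <;> linarith
end
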